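/- Every codense frame homomorphism from a zero-dimensional frame is injective. -/

import Mathlib

/-!
A complemented element `c` with complement `c'` lies below `b` exactly when `b ⊔ c' = ⊤`.
A codense homomorphism reflects equations `x = ⊤`, hence it reflects `c ≤ b` for complemented `c`;
in a zero-dimensional frame every element is a join of complemented ones, so `f` reflects the
order and is therefore injective.
-/

theorem IsCompl.le_of_map_le_of_codense {L M F : Type*} [DistribLattice L] [BoundedOrder L]
    [SemilatticeSup M] [OrderTop M] [FunLike F L M] [SupHomClass F L M] [TopHomClass F L M]
    {f : F} (hf : ∀ x, f x = ⊤ → x = ⊤) {b c c' : L} (hc : IsCompl c c') (h : f c ≤ f b) :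
    c ≤ b := by
  have hb : f (b ⊔ c') = ⊤ := top_le_iff.1 <|
    calc ⊤ = f (c ⊔ c') := by rw [hc.sup_eq_top, map_top]
      _ = f c ⊔ f c' := map_sup f c c'
      _ ≤ f b ⊔ f c' := sup_le_sup_right h _
      _ = f (b ⊔ c') := (map_sup f b c').symm
  simpa using hc.le_sup_right_iff_inf_left_le.1 (hf _ hb).ge

theorem Monotone.le_of_map_le_of_forall_eq_sSup {L M : Type*} [CompleteLattice L] [Preorder M]
    {f : L → M} (hf : Monotone f) {P : Set L} (hP : ∀ x, ∃ S ⊆ P, x = sSup S)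
    (hrefl : ∀ c ∈ P, ∀ b, f c ≤ f b → c ≤ b) {a b : L} (h : f a ≤ f b) : a ≤ b := by
  obtain ⟨S, hSP, rfl⟩ := hP a
  exact sSup_le fun c hc => hrefl c (hSP hc) b ((hf (le_sSup hc)).trans h)

/-- Every codense frame homomorphism from a zero-dimensional frame is injective. -/
theorem codense_from_zeroDimensional_injective {L : Type*} {M : Type*}
    [Order.Frame L] [Order.Frame M] (f : FrameHom L M)
    (hzd : ∀ x : L, ∃ S ⊆ {y : L | ∃ z, IsCompl y z}, x = sSup S)
    (hcodense : ∀ x : L, f x = ⊤ → x = ⊤) :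
    Function.Injective f := by
  have reflects {a b : L} : f a ≤ f b → a ≤ b :=
    (OrderHomClass.mono f).le_of_map_le_of_forall_eq_sSup hzd
      fun _ ⟨_, hc⟩ _ => hc.le_of_map_le_of_codense hcodense
  exact fun a b h => le_antisymm (reflects h.le) (reflects h.ge)
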